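/- There exists a coloring function on the set of rational points of the unit sphere; that is, there exists a function c : S² ∩ ℚ³ → {0,1} such that c(a) = c(-a) for all rational unit vectors a, c(a₁) + c(a₂) + c(a₃) = 2 for every orthonormal triple of rational unit vectors, and c(a₁) + c(a₂) ≥ 1 for every pair of orthogonal rational unit vectors. -/

import Mathlib

noncomputable section

/-- Euclidean ℝ³. -/
abbrev V3 : Type := EuclideanSpace ℝ (Fin 3)

/-- The unit sphere S² in ℝ³. -/
def Sphere2 : Set V3 := {a | ‖a‖ = 1}

/-- A vector with all coordinates rational. -/
def IsRatVec (a : V3) : Prop := ∀ i : Fin 3, ∃ q : ℚ, a i = (q : ℝ)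

/-- A coloring function on a subset `D` of the sphere. -/
def IsColoring (D : Set V3) (c : V3 → Fin 2) : Prop :=
  (∀ a ∈ D, -a ∈ D → c a = c (-a)) ∧
  (∀ a₁ a₂ a₃ : V3, a₁ ∈ D → a₂ ∈ D → a₃ ∈ D → Orthonormal ℝ ![a₁, a₂, a₃] →
      (c a₁ : ℕ) + (c a₂ : ℕ) + (c a₃ : ℕ) = 2) ∧
  (∀ a₁ a₂ : V3, a₁ ∈ D → a₂ ∈ D → (inner ℝ a₁ a₂ : ℝ) = 0 →
      1 ≤ (c a₁ : ℕ) + (c a₂ : ℕ))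

open scoped Classical in
/-- Extract the rational value of a real number, when it is rational. -/
def toRat (x : ℝ) : ℚ := if h : ∃ q : ℚ, x = (q : ℝ) then h.choose else 0

lemma toRat_spec {x : ℝ} {q : ℚ} (h : x = (q : ℝ)) : toRat x = q := by
  have hex : ∃ p : ℚ, x = (p : ℝ) := ⟨q, h⟩
  rw [toRat, dif_pos hex]
  have h2 : x = (hex.choose : ℝ) := hex.choose_spec
  exact_mod_cast (h2.symm.trans h)

/-- If `n` is even and `p` is odd then `p²+q²+r² ≠ n²`. -/
lemma nt1 (p q r n : ℤ) (h : p ^ 2 + q ^ 2 + r ^ 2 = n ^ 2) (hn : Even n) (hp : Odd p) :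
    False := by
  obtain ⟨m, hm⟩ := hn
  obtain ⟨k, hk⟩ := hp
  subst hm hk
  have h4 := congrArg (fun t : ℤ => (t : ZMod 4)) h
  push_cast at h4
  generalize ((k : ℤ) : ZMod 4) = K at h4
  generalize ((q : ℤ) : ZMod 4) = Q at h4
  generalize ((r : ℤ) : ZMod 4) = R at h4
  generalize ((m : ℤ) : ZMod 4) = M at h4
  revert h4
  revert K Q R M
  decide

/-- If `n` is odd and `p²+q²+r² = n²` then exactly one of `p,q,r` is odd. -/
lemma nt2 (p q r n : ℤ) (h : p ^ 2 + q ^ 2 + r ^ 2 = n ^ 2) (hn : Odd n) :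
    (Odd p ∧ Even q ∧ Even r) ∨ (Even p ∧ Odd q ∧ Even r) ∨ (Even p ∧ Even q ∧ Odd r) := by
  obtain ⟨t, ht⟩ := hn
  rcases Int.even_or_odd p with hp | hp <;> rcases Int.even_or_odd q with hq | hq <;>
      rcases Int.even_or_odd r with hr | hr
  · exfalso
    obtain ⟨a, ha⟩ := hp; obtain ⟨b, hb⟩ := hq; obtain ⟨c, hc⟩ := hr
    subst ha hb hc ht
    have h4 := congrArg (fun t : ℤ => (t : ZMod 4)) h
    push_cast at h4
    generalize ((a : ℤ) : ZMod 4) = A at h4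
    generalize ((b : ℤ) : ZMod 4) = B at h4
    generalize ((c : ℤ) : ZMod 4) = C at h4
    generalize ((t : ℤ) : ZMod 4) = T at h4
    revert h4; revert A B C T; decide
  · exact Or.inr (Or.inr ⟨hp, hq, hr⟩)
  · exact Or.inr (Or.inl ⟨hp, hq, hr⟩)
  · exfalso
    obtain ⟨a, ha⟩ := hp; obtain ⟨b, hb⟩ := hq; obtain ⟨c, hc⟩ := hr
    subst ha hb hc ht
    have h4 := congrArg (fun t : ℤ => (t : ZMod 4)) h
    push_cast at h4
    generalize ((a : ℤ) : ZMod 4) = A at h4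
    generalize ((b : ℤ) : ZMod 4) = B at h4
    generalize ((c : ℤ) : ZMod 4) = C at h4
    generalize ((t : ℤ) : ZMod 4) = T at h4
    revert h4; revert A B C T; decide
  · exact Or.inl ⟨hp, hq, hr⟩
  · exfalso
    obtain ⟨a, ha⟩ := hp; obtain ⟨b, hb⟩ := hq; obtain ⟨c, hc⟩ := hr
    subst ha hb hc ht
    have h4 := congrArg (fun t : ℤ => (t : ZMod 4)) h
    push_cast at h4
    generalize ((a : ℤ) : ZMod 4) = A at h4
    generalize ((b : ℤ) : ZMod 4) = B at h4
    generalize ((c : ℤ) : ZMod 4) = C at h4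
    generalize ((t : ℤ) : ZMod 4) = T at h4
    revert h4; revert A B C T; decide
  · exfalso
    obtain ⟨a, ha⟩ := hp; obtain ⟨b, hb⟩ := hq; obtain ⟨c, hc⟩ := hr
    subst ha hb hc ht
    have h4 := congrArg (fun t : ℤ => (t : ZMod 4)) h
    push_cast at h4
    generalize ((a : ℤ) : ZMod 4) = A at h4
    generalize ((b : ℤ) : ZMod 4) = B at h4
    generalize ((c : ℤ) : ZMod 4) = C at h4
    generalize ((t : ℤ) : ZMod 4) = T at h4
    revert h4; revert A B C T; decide
  · exfalso
    obtain ⟨a, ha⟩ := hp; obtain ⟨b, hb⟩ := hq; obtain ⟨c, hc⟩ := hr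
    subst ha hb hc ht
    have h4 := congrArg (fun t : ℤ => (t : ZMod 4)) h
    push_cast at h4
    generalize ((a : ℤ) : ZMod 4) = A at h4
    generalize ((b : ℤ) : ZMod 4) = B at h4
    generalize ((c : ℤ) : ZMod 4) = C at h4
    generalize ((t : ℤ) : ZMod 4) = T at h4
    revert h4; revert A B C T; decide

lemma nt3 (p q r u v w : ℤ) (hp : Odd p) (hu : Odd u) (hq : Even q) (hr : Even r)
    (h : p * u + q * v + r * w = 0) : False := by
  have h1 : Odd (p * u) := hp.mul hu
  have h2 : Even (q * v + r * w) := (hq.mul_right v).add (hr.mul_right w)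
  have h3 : Odd (p * u + (q * v + r * w)) := h1.add_even h2
  rw [show p * u + (q * v + r * w) = p * u + q * v + r * w by ring, h] at h3
  simp [Int.odd_iff] at h3

/-- If `N` is even and a denominator achieves the full 2-adic valuation of `N`,
then the corresponding integer numerator is odd. -/
lemma oddP (x : ℚ) {N : ℕ} (hN0 : N ≠ 0) (hd : x.den ∣ N)
    (hk : N.factorization 2 = x.den.factorization 2) (hEven : Even N) :
    Odd (x.num * ((N / x.den : ℕ) : ℤ)) := by
  have h2N : 2 ∣ N := hEven.two_dvd
  have hpos : 0 < x.den.factorization 2 := by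
    rw [← hk]; exact Nat.Prime.factorization_pos_of_dvd Nat.prime_two hN0 h2N
  have h2d : 2 ∣ x.den := Nat.dvd_of_factorization_pos hpos.ne'
  have hnum : Odd x.num := by
    rcases Int.even_or_odd x.num with he | ho
    · exfalso
      have h2n : 2 ∣ x.num.natAbs := (Int.natAbs_even.mpr he).two_dvd
      have := Nat.dvd_gcd h2n h2d
      rw [x.reduced] at this
      omega
    · exact ho
  have hq : Odd ((N / x.den : ℕ) : ℤ) := by
    rw [Int.odd_coe_nat]
    have hne : N / x.den ≠ 0 := by
      have := Nat.div_pos (Nat.le_of_dvd (Nat.pos_of_ne_zero hN0) hd) x.pos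
      omega
    have hfz : (N / x.den).factorization 2 = 0 := by
      rw [Nat.factorization_div hd, Finsupp.tsub_apply, hk]
      omega
    have hnd : ¬ 2 ∣ (N / x.den) := by
      intro hdvd
      have := Nat.Prime.factorization_pos_of_dvd Nat.prime_two hne hdvd
      omega
    rw [Nat.odd_iff]
    omega
  exact hnum.mul hq

/-- Key representation lemma: a rational point of the sphere has an integer
representation over a common odd denominator, preserving numerator parities. -/
lemma key (x y z : ℚ) (h : x ^ 2 + y ^ 2 + z ^ 2 = 1) :
    ∃ (P Q R : ℤ) (N : ℕ), Odd N ∧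
      (P : ℚ) = x * N ∧ (Q : ℚ) = y * N ∧ (R : ℚ) = z * N ∧
      (Odd P ↔ Odd x.num) ∧ (Odd Q ↔ Odd y.num) ∧ (Odd R ↔ Odd z.num) ∧
      P ^ 2 + Q ^ 2 + R ^ 2 = (N : ℤ) ^ 2 := by
  have hx0 : x.den ≠ 0 := x.den_nz
  have hy0 : y.den ≠ 0 := y.den_nz
  have hz0 : z.den ≠ 0 := z.den_nz
  set N : ℕ := (x.den.lcm y.den).lcm z.den with hNdef
  have hN0 : N ≠ 0 := Nat.lcm_ne_zero (Nat.lcm_ne_zero hx0 hy0) hz0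
  have hdx : x.den ∣ N := (Nat.dvd_lcm_left _ _).trans (Nat.dvd_lcm_left _ _)
  have hdy : y.den ∣ N := (Nat.dvd_lcm_right _ _).trans (Nat.dvd_lcm_left _ _)
  have hdz : z.den ∣ N := Nat.dvd_lcm_right _ _
  have cast_eq : ∀ (w : ℚ), w.den ∣ N →
      ((w.num * ((N / w.den : ℕ) : ℤ) : ℤ) : ℚ) = w * N := by
    intro w hw
    have hw0 : (w.den : ℚ) ≠ 0 := by exact_mod_cast w.den_nz
    have h1 : ((N / w.den : ℕ) : ℚ) = (N : ℚ) / (w.den : ℚ) := by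
      rw [Nat.cast_div hw hw0]
    have h2 : w * (w.den : ℚ) = (w.num : ℚ) := Rat.mul_den_eq_num w
    rw [Int.cast_mul, Int.cast_natCast, h1]
    field_simp
    rw [← h2]
    ring
  set P := x.num * ((N / x.den : ℕ) : ℤ) with hP
  set Q := y.num * ((N / y.den : ℕ) : ℤ) with hQ
  set R := z.num * ((N / z.den : ℕ) : ℤ) with hR
  have hPx : (P : ℚ) = x * N := cast_eq x hdx
  have hQy : (Q : ℚ) = y * N := cast_eq y hdy
  have hRz : (R : ℚ) = z * N := cast_eq z hdz
  have hint : P ^ 2 + Q ^ 2 + R ^ 2 = (N : ℤ) ^ 2 := by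
    have hc : ((P ^ 2 + Q ^ 2 + R ^ 2 : ℤ) : ℚ) = (((N : ℤ) ^ 2 : ℤ) : ℚ) := by
      push_cast
      rw [hPx, hQy, hRz]
      linear_combination ((N : ℚ)) ^ 2 * h
    exact_mod_cast hc
  have hNodd : Odd N := by
    by_contra hne
    have hEven : Even N := Nat.not_odd_iff_even.mp hne
    have hmax : N.factorization 2 =
        max (max (x.den.factorization 2) (y.den.factorization 2)) (z.den.factorization 2) := by
      rw [hNdef, Nat.factorization_lcm (Nat.lcm_ne_zero hx0 hy0) hz0,
        Nat.factorization_lcm hx0 hy0]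
      simp [Finsupp.sup_apply]
    have hEvenZ : Even ((N : ℕ) : ℤ) := by exact_mod_cast hEven
    rcases max_choice (max (x.den.factorization 2) (y.den.factorization 2))
        (z.den.factorization 2) with h1 | h1
    · rcases max_choice (x.den.factorization 2) (y.den.factorization 2) with h2 | h2
      · have hk : N.factorization 2 = x.den.factorization 2 := by rw [hmax, h1, h2]
        exact nt1 P Q R N hint hEvenZ (oddP x hN0 hdx hk hEven)
      · have hk : N.factorization 2 = y.den.factorization 2 := by rw [hmax, h1, h2]
        exact nt1 Q P R N (by linear_combination hint) hEvenZ (oddP y hN0 hdy hk hEven)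
    · have hk : N.factorization 2 = z.den.factorization 2 := by rw [hmax, h1]
      exact nt1 R P Q N (by linear_combination hint) hEvenZ (oddP z hN0 hdz hk hEven)
  have hodd_div : ∀ w : ℚ, w.den ∣ N → Odd ((N / w.den : ℕ) : ℤ) := by
    intro w hw
    rw [Int.odd_coe_nat]
    rcases Nat.even_or_odd (N / w.den) with he | ho
    · exfalso
      have : N = (N / w.den) * w.den := (Nat.div_mul_cancel hw).symm
      have hEN : Even N := by rw [this]; exact he.mul_right _
      exact (Nat.not_odd_iff_even.mpr hEN) hNodd
    · exact ho
  refine ⟨P, Q, R, N, hNodd, hPx, hQy, hRz, ?_, ?_, ?_, hint⟩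
  · rw [hP, Int.odd_mul]
    exact ⟨fun h' => h'.1, fun h' => ⟨h', hodd_div x hdx⟩⟩
  · rw [hQ, Int.odd_mul]
    exact ⟨fun h' => h'.1, fun h' => ⟨h', hodd_div y hdy⟩⟩
  · rw [hR, Int.odd_mul]
    exact ⟨fun h' => h'.1, fun h' => ⟨h', hodd_div z hdz⟩⟩

lemma exactlyOneQ (x y z : ℚ) (h : x ^ 2 + y ^ 2 + z ^ 2 = 1) :
    (Odd x.num ∧ ¬Odd y.num ∧ ¬Odd z.num) ∨ (¬Odd x.num ∧ Odd y.num ∧ ¬Odd z.num) ∨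
      (¬Odd x.num ∧ ¬Odd y.num ∧ Odd z.num) := by
  obtain ⟨P, Q, R, N, hN, _, _, _, hip, hiq, hir, hint⟩ := key x y z h
  have hNZ : Odd ((N : ℕ) : ℤ) := by rw [Int.odd_coe_nat]; exact hN
  rcases nt2 P Q R N hint hNZ with ⟨h1, h2, h3⟩ | ⟨h1, h2, h3⟩ | ⟨h1, h2, h3⟩
  · exact Or.inl ⟨hip.mp h1, fun hc => (Int.not_odd_iff_even.mpr h2) (hiq.mpr hc),
      fun hc => (Int.not_odd_iff_even.mpr h3) (hir.mpr hc)⟩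
  · exact Or.inr (Or.inl ⟨fun hc => (Int.not_odd_iff_even.mpr h1) (hip.mpr hc), hiq.mp h2,
      fun hc => (Int.not_odd_iff_even.mpr h3) (hir.mpr hc)⟩)
  · exact Or.inr (Or.inr ⟨fun hc => (Int.not_odd_iff_even.mpr h1) (hip.mpr hc),
      fun hc => (Int.not_odd_iff_even.mpr h2) (hiq.mpr hc), hir.mp h3⟩)

lemma orthQ (x y z u v w : ℚ) (h1 : x ^ 2 + y ^ 2 + z ^ 2 = 1)
    (h2 : u ^ 2 + v ^ 2 + w ^ 2 = 1) (ho : x * u + y * v + z * w = 0)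
    (hx : Odd x.num) (hu : Odd u.num) : False := by
  obtain ⟨P, Q, R, N, hN, hPx, hQy, hRz, hip, hiq, hir, _⟩ := key x y z h1
  obtain ⟨P', Q', R', M, hM, hPu, hQv, hRw, hip', _, _, _⟩ := key u v w h2
  have hsum : P * P' + Q * Q' + R * R' = 0 := by
    have hc : ((P * P' + Q * Q' + R * R' : ℤ) : ℚ) = 0 := by
      push_cast
      rw [hPx, hQy, hRz, hPu, hQv, hRw]
      linear_combination ((N : ℚ) * (M : ℚ)) * ho
    exact_mod_cast hc
  have hEQ : Even Q := by
    rcases exactlyOneQ x y z h1 with ⟨_, hy', _⟩ | ⟨hx', _, _⟩ | ⟨hx', _, _⟩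
    · exact Int.not_odd_iff_even.mp (fun hc => hy' (hiq.mp hc))
    · exact absurd hx hx'
    · exact absurd hx hx'
  have hER : Even R := by
    rcases exactlyOneQ x y z h1 with ⟨_, _, hz'⟩ | ⟨hx', _, _⟩ | ⟨hx', _, _⟩
    · exact Int.not_odd_iff_even.mp (fun hc => hz' (hir.mp hc))
    · exact absurd hx hx'
    · exact absurd hx hx'
  exact nt3 P Q R P' Q' R' (hip.mpr hx) (hip'.mpr hu) hEQ hER hsum

/-- Coordinates of a point in the rational sphere, and the sum-of-squares identity. -/
lemma mem_facts {a : V3} (h : a ∈ Sphere2 ∩ {a | IsRatVec a}) :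
    (∀ i : Fin 3, a i = ((toRat (a i) : ℚ) : ℝ)) ∧
    (toRat (a 0)) ^ 2 + (toRat (a 1)) ^ 2 + (toRat (a 2)) ^ 2 = 1 := by
  obtain ⟨hs, hr⟩ := h
  have hco : ∀ i : Fin 3, a i = ((toRat (a i) : ℚ) : ℝ) := by
    intro i; obtain ⟨q, hq⟩ := hr i; rw [toRat_spec hq]; exact hq
  refine ⟨hco, ?_⟩
  have hs' : ‖a‖ = 1 := hs
  rw [EuclideanSpace.norm_eq] at hs'
  have hsum : ∑ i : Fin 3, ‖a i‖ ^ 2 = 1 := Real.sqrt_eq_one.mp hs'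
  have hsum2 : (a 0) ^ 2 + (a 1) ^ 2 + (a 2) ^ 2 = 1 := by
    rw [Fin.sum_univ_three] at hsum
    simpa [Real.norm_eq_abs, sq_abs] using hsum
  have hc : (((toRat (a 0)) ^ 2 + (toRat (a 1)) ^ 2 + (toRat (a 2)) ^ 2 : ℚ) : ℝ) = 1 := by
    push_cast
    rw [← hco 0, ← hco 1, ← hco 2]
    exact hsum2
  exact_mod_cast hc

lemma inner_facts {a b : V3} (hi : (inner ℝ a b : ℝ) = 0)
    (hca : ∀ i : Fin 3, a i = ((toRat (a i) : ℚ) : ℝ))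
    (hcb : ∀ i : Fin 3, b i = ((toRat (b i) : ℚ) : ℝ)) :
    (toRat (a 0)) * (toRat (b 0)) + (toRat (a 1)) * (toRat (b 1)) +
      (toRat (a 2)) * (toRat (b 2)) = 0 := by
  have hi' : ∑ i : Fin 3, (a i) * (b i) = 0 := by
    rw [PiLp.inner_apply] at hi
    simpa [RCLike.inner_apply, starRingEnd_apply, mul_comm] using hi
  rw [Fin.sum_univ_three] at hi'
  have hc : (((toRat (a 0)) * (toRat (b 0)) + (toRat (a 1)) * (toRat (b 1)) +
      (toRat (a 2)) * (toRat (b 2)) : ℚ) : ℝ) = 0 := by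
    push_cast
    rw [← hca 0, ← hca 1, ← hca 2, ← hcb 0, ← hcb 1, ← hcb 2]
    exact hi'
  exact_mod_cast hc

/-- No two orthogonal rational unit vectors have an odd numerator at the same coordinate. -/
lemma noshare {a b : V3} (ha : a ∈ Sphere2 ∩ {a | IsRatVec a})
    (hb : b ∈ Sphere2 ∩ {a | IsRatVec a}) (hi : (inner ℝ a b : ℝ) = 0) (i : Fin 3) :
    ¬(Odd (toRat (a i)).num ∧ Odd (toRat (b i)).num) := by
  obtain ⟨hca, hsa⟩ := mem_facts ha
  obtain ⟨hcb, hsb⟩ := mem_facts hb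
  have ho := inner_facts hi hca hcb
  rintro ⟨h1, h2⟩
  fin_cases i
  · exact orthQ _ _ _ _ _ _ hsa hsb ho h1 h2
  · exact orthQ (toRat (a 1)) (toRat (a 0)) (toRat (a 2)) (toRat (b 1)) (toRat (b 0))
      (toRat (b 2)) (by linear_combination hsa) (by linear_combination hsb)
      (by linear_combination ho) h1 h2
  · exact orthQ (toRat (a 2)) (toRat (a 0)) (toRat (a 1)) (toRat (b 2)) (toRat (b 0))
      (toRat (b 1)) (by linear_combination hsa) (by linear_combination hsb)
      (by linear_combination ho) h1 h2

set_option maxHeartbeats 2000000 in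
/-- Meyer's theorem (coloring-existence part): the rational points of the unit sphere
admit a coloring function. -/
theorem exists_coloring_on_rational_sphere :
    ∃ c : V3 → Fin 2, IsColoring (Sphere2 ∩ {a | IsRatVec a}) c := by
  refine ⟨fun a => if Odd (toRat (a 0)).num then 0 else 1, ?_, ?_, ?_⟩
  · -- symmetry under negation
    intro a ha hna
    have hca := (mem_facts ha).1
    have hneg : (-a) 0 = ((-(toRat (a 0)) : ℚ) : ℝ) := by
      have h0 : (-a) 0 = -(a 0) := rfl
      rw [h0]
      push_cast
      exact congrArg (fun t => -t) (hca 0)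
    have hT : toRat ((-a) 0) = -(toRat (a 0)) := toRat_spec hneg
    simp only [hT, Rat.neg_num]
    congr 1
    simp [odd_neg]
  · -- orthonormal triples
    intro a₁ a₂ a₃ h1 h2 h3 hON
    have h12 : (inner ℝ a₁ a₂ : ℝ) = 0 := by
      have := hON.2 (show (0 : Fin 3) ≠ 1 by decide)
      simpa using this
    have h13 : (inner ℝ a₁ a₃ : ℝ) = 0 := by
      have := hON.2 (show (0 : Fin 3) ≠ 2 by decide)
      simpa using this
    have h23 : (inner ℝ a₂ a₃ : ℝ) = 0 := by
      have := hON.2 (show (1 : Fin 3) ≠ 2 by decide)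
      simpa using this
    have e1 := exactlyOneQ _ _ _ (mem_facts h1).2
    have e2 := exactlyOneQ _ _ _ (mem_facts h2).2
    have e3 := exactlyOneQ _ _ _ (mem_facts h3).2
    have n12 := fun i => noshare h1 h2 h12 i
    have n13 := fun i => noshare h1 h3 h13 i
    have n23 := fun i => noshare h2 h3 h23 i
    by_cases hb1 : Odd (toRat (a₁ 0)).num <;> by_cases hb2 : Odd (toRat (a₂ 0)).num <;>
        by_cases hb3 : Odd (toRat (a₃ 0)).num
    · exact absurd ⟨hb1, hb2⟩ (n12 0)
    · exact absurd ⟨hb1, hb2⟩ (n12 0)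
    · exact absurd ⟨hb1, hb3⟩ (n13 0)
    · simp [hb1, hb2, hb3]
    · exact absurd ⟨hb2, hb3⟩ (n23 0)
    · simp [hb1, hb2, hb3]
    · simp [hb1, hb2, hb3]
    · exfalso
      have m12 := n12 1; have m13 := n13 1; have m23 := n23 1
      have k12 := n12 2; have k13 := n13 2; have k23 := n23 2
      tauto
  · -- orthogonal pairs
    intro a₁ a₂ h1 h2 hi
    have := noshare h1 h2 hi 0
    by_cases hb1 : Odd (toRat (a₁ 0)).num <;> by_cases hb2 : Odd (toRat (a₂ 0)).num
    · exact absurd ⟨hb1, hb2⟩ this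
    · simp [hb1, hb2]
    · simp [hb1, hb2]
    · simp [hb1, hb2]
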